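/- Let k ≥ 2 and n ≥ 2 be integers. The number of real roots of P^k_n that are not roots of P^k_i for any 1 ≤ i < n is exactly φ(n), where φ is Euler's totient function. -/

import Mathlib

open Polynomial

/-- The generalized Fibonacci polynomials `P^k_n ∈ ℝ[x]`:
`P^k_0 = 0`, `P^k_1 = 1`, `P^k_n = x·P^k_{n-1} − k·P^k_{n-2}`. -/
noncomputable def Ppoly (k : ℕ) : ℕ → Polynomial ℝ
  | 0 => 0
  | 1 => 1
  | n + 2 => X * Ppoly k (n + 1) - C (k : ℝ) * Ppoly k n

lemma ppoly_eval_sin (k : ℕ) (θ : ℝ) (n : ℕ) :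
    (Ppoly k n).eval (2 * Real.sqrt k * Real.cos θ) * (Real.sqrt k * Real.sin θ)
      = (Real.sqrt k) ^ n * Real.sin (n * θ) := by
  induction n using Nat.twoStepInduction with
  | zero => simp [Ppoly]
  | one => simp [Ppoly]
  | more n ih1 ih2 =>
    have key : Real.sin (((n:ℝ)+2) * θ)
        = 2 * Real.cos θ * Real.sin (((n:ℝ)+1)*θ) - Real.sin ((n:ℝ)*θ) := by
      have h1 : ((n:ℝ)+2)*θ = ((n:ℝ)+1)*θ + θ := by ring
      have h2 : ((n:ℝ))*θ = ((n:ℝ)+1)*θ - θ := by ring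
      rw [h1, h2, Real.sin_add, Real.sin_sub]; ring
    have hk2 : (Real.sqrt k) ^ 2 = (k : ℝ) := Real.sq_sqrt (by positivity)
    simp only [Ppoly, eval_sub, eval_mul, eval_X, eval_C]
    push_cast at ih1 ih2 ⊢
    linear_combination (2 * Real.sqrt k * Real.cos θ) * ih2 - (k:ℝ) * ih1
      - (Real.sqrt k)^(n+2) * key + (Real.sqrt k)^n * Real.sin ((n:ℝ)*θ) * hk2

lemma ppoly_monic (k : ℕ) (m : ℕ) :
    (Ppoly k (m+1)).Monic ∧ (Ppoly k (m+1)).degree = (m : WithBot ℕ) := by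
  induction m using Nat.twoStepInduction with
  | zero => refine ⟨monic_one, ?_⟩; simp [Ppoly]
  | one =>
    have h : Ppoly k 2 = X := by simp [Ppoly]
    rw [h]; exact ⟨monic_X, degree_X⟩
  | more m ih1 ih2 =>
    obtain ⟨hm2, hd2⟩ := ih2
    have hrec : Ppoly k (m+3) = X * Ppoly k (m+2) + -(C (k:ℝ) * Ppoly k (m+1)) := by
      show Ppoly k (m+1+2) = _
      rw [Ppoly]; ring
    have hdX : (X * Ppoly k (m+2)).degree = ((m+2 : ℕ) : WithBot ℕ) := by
      rw [degree_mul, degree_X, hd2]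
      norm_cast
      omega
    have hlt : (-(C (k:ℝ) * Ppoly k (m+1))).degree < (X * Ppoly k (m+2)).degree := by
      rw [degree_neg, hdX]
      refine lt_of_le_of_lt (degree_mul_le _ _) ?_
      refine lt_of_le_of_lt (add_le_add degree_C_le (le_of_eq ih1.2)) ?_
      rw [zero_add]
      exact_mod_cast Nat.lt_succ_of_lt (Nat.lt_succ_self m)
    refine ⟨?_, ?_⟩
    · rw [hrec]
      exact ((monic_X.mul hm2).add_of_left hlt)
    · rw [hrec, degree_add_eq_left_of_degree_lt hlt, hdX]

lemma ppoly_isRoot_iff (k : ℕ) (hk : 2 ≤ k) (i : ℕ) (θ : ℝ) (hθ : Real.sin θ ≠ 0) :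
    (Ppoly k i).IsRoot (2 * Real.sqrt k * Real.cos θ) ↔ Real.sin (i * θ) = 0 := by
  have hkpos : (0:ℝ) < k := by exact_mod_cast Nat.lt_of_lt_of_le Nat.zero_lt_two hk
  have hs : (0:ℝ) < Real.sqrt k := Real.sqrt_pos.2 hkpos
  have h := ppoly_eval_sin k θ i
  constructor
  · intro hr
    rw [IsRoot.def] at hr
    rw [hr, zero_mul] at h
    have hsi : (Real.sqrt k) ^ i ≠ 0 := by positivity
    exact (mul_eq_zero.1 h.symm).resolve_left hsi
  · intro h0
    rw [h0, mul_zero] at h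
    have hne : Real.sqrt k * Real.sin θ ≠ 0 := mul_ne_zero (ne_of_gt hs) hθ
    exact (mul_eq_zero.1 h).resolve_right hne

lemma sin_theta_ne (n j : ℕ) (hj1 : 1 ≤ j) (hj2 : j ≤ n - 1) (hn : 2 ≤ n) :
    Real.sin ((j : ℝ) * Real.pi / n) ≠ 0 := by
  have hjn : (j : ℝ) < n := by exact_mod_cast (by omega : j < n)
  have hnpos : (0:ℝ) < n := by exact_mod_cast (by omega : 0 < n)
  have h1 : 0 < (j : ℝ) * Real.pi / n := by
    have : (0:ℝ) < j := by exact_mod_cast hj1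
    positivity
  have h2 : (j : ℝ) * Real.pi / n < Real.pi := by
    rw [div_lt_iff₀ hnpos]
    have := Real.pi_pos
    nlinarith
  exact ne_of_gt (Real.sin_pos_of_pos_of_lt_pi h1 h2)

lemma ppoly_rootset (k n : ℕ) (hk : 2 ≤ k) (hn : 2 ≤ n) :
    {x : ℝ | (Ppoly k n).IsRoot x} =
      ↑((Finset.Icc 1 (n-1)).image (fun j : ℕ => 2 * Real.sqrt k * Real.cos (j * Real.pi / n))) := by
  have hkpos : (0:ℝ) < k := by exact_mod_cast Nat.lt_of_lt_of_le Nat.zero_lt_two hk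
  have hs : (0:ℝ) < Real.sqrt k := Real.sqrt_pos.2 hkpos
  have hnpos : (0:ℝ) < n := by exact_mod_cast (by omega : 0 < n)
  have hinj : Set.InjOn (fun j : ℕ => 2 * Real.sqrt k * Real.cos (j * Real.pi / n))
      ↑(Finset.Icc 1 (n-1)) := by
    intro a ha b hb hab
    simp only [Finset.coe_Icc, Set.mem_Icc] at ha hb
    have hmem : ∀ c : ℕ, 1 ≤ c → c ≤ n - 1 → (c : ℝ) * Real.pi / n ∈ Set.Icc 0 Real.pi := by
      intro c h1 h2
      constructor
      · positivity
      · rw [div_le_iff₀ hnpos]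
        have hcn : (c : ℝ) ≤ n := by exact_mod_cast (by omega : c ≤ n)
        nlinarith [Real.pi_pos]
    have hcos : Real.cos ((a : ℝ) * Real.pi / n) = Real.cos ((b : ℝ) * Real.pi / n) :=
      mul_left_cancel₀ (by positivity : (2 * Real.sqrt k : ℝ) ≠ 0) hab
    have := Real.injOn_cos (hmem a ha.1 ha.2) (hmem b hb.1 hb.2) hcos
    field_simp at this
    exact_mod_cast (by linarith : (a:ℝ) = b)
  have hcard : ((Finset.Icc 1 (n-1)).image
      (fun j : ℕ => 2 * Real.sqrt k * Real.cos (j * Real.pi / n))).card = n - 1 := by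
    rw [Finset.card_image_of_injOn hinj, Nat.card_Icc]
    omega
  have hmd := ppoly_monic k (n-1)
  rw [(by omega : n - 1 + 1 = n)] at hmd
  obtain ⟨hmon, hdeg⟩ := hmd
  have hne : Ppoly k n ≠ 0 := hmon.ne_zero
  have hnatdeg : (Ppoly k n).natDegree = n - 1 := natDegree_eq_of_degree_eq_some hdeg
  have hsub : ((Finset.Icc 1 (n-1)).image
      (fun j : ℕ => 2 * Real.sqrt k * Real.cos (j * Real.pi / n))) ⊆ (Ppoly k n).roots.toFinset := by
    intro x hx
    obtain ⟨j, hj, rfl⟩ := Finset.mem_image.1 hx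
    rw [Finset.mem_Icc] at hj
    rw [Multiset.mem_toFinset, mem_roots hne]
    rw [ppoly_isRoot_iff k hk n _ (sin_theta_ne n j hj.1 hj.2 hn)]
    have : (n : ℝ) * ((j : ℝ) * Real.pi / n) = j * Real.pi := by
      field_simp
    rw [this]
    exact Real.sin_nat_mul_pi j
  have hcard2 : (Ppoly k n).roots.toFinset.card ≤ n - 1 := by
    refine le_trans (Multiset.toFinset_card_le _) ?_
    rw [← hnatdeg]
    exact_mod_cast (Polynomial.card_roots' (Ppoly k n))
  have hSeq : ((Finset.Icc 1 (n-1)).image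
      (fun j : ℕ => 2 * Real.sqrt k * Real.cos (j * Real.pi / n))) = (Ppoly k n).roots.toFinset :=
    Finset.eq_of_subset_of_card_le hsub (by rw [hcard]; exact hcard2)
  ext x
  simp only [Set.mem_setOf_eq, Finset.coe_sort_coe, Finset.mem_coe, hSeq,
    Multiset.mem_toFinset, mem_roots hne]

/-- For `k ≥ 2` and `n ≥ 2`, the number of real roots of `P^k_n`
that are not roots of `P^k_i` for any `1 ≤ i < n` is exactly `φ(n)`. -/
theorem new_roots_count (k n : ℕ) (hk : 2 ≤ k) (hn : 2 ≤ n) :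
    Set.ncard {x : ℝ | (Ppoly k n).IsRoot x ∧
        ∀ i : ℕ, 1 ≤ i → i < n → ¬ (Ppoly k i).IsRoot x} = Nat.totient n := by
  have hkpos : (0:ℝ) < k := by exact_mod_cast Nat.lt_of_lt_of_le Nat.zero_lt_two hk
  have hs : (0:ℝ) < Real.sqrt k := Real.sqrt_pos.2 hkpos
  have hnpos : (0:ℝ) < n := by exact_mod_cast (by omega : 0 < n)
  set f : ℕ → ℝ := fun j : ℕ => 2 * Real.sqrt k * Real.cos (j * Real.pi / n) with hf
  -- the set equality
  have hroots := ppoly_rootset k n hk hn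
  have hinj : Set.InjOn f ↑(Finset.Icc 1 (n-1)) := by
    intro a ha b hb hab
    simp only [Finset.coe_Icc, Set.mem_Icc] at ha hb
    have hmem : ∀ c : ℕ, 1 ≤ c → c ≤ n - 1 → (c : ℝ) * Real.pi / n ∈ Set.Icc 0 Real.pi := by
      intro c h1 h2
      constructor
      · positivity
      · rw [div_le_iff₀ hnpos]
        have hcn : (c : ℝ) ≤ n := by exact_mod_cast (by omega : c ≤ n)
        nlinarith [Real.pi_pos]
    have hcos : Real.cos ((a : ℝ) * Real.pi / n) = Real.cos ((b : ℝ) * Real.pi / n) :=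
      mul_left_cancel₀ (by positivity : (2 * Real.sqrt k : ℝ) ≠ 0) hab
    have := Real.injOn_cos (hmem a ha.1 ha.2) (hmem b hb.1 hb.2) hcos
    field_simp at this
    exact_mod_cast (by linarith : (a:ℝ) = b)
  have hTeq : {x : ℝ | (Ppoly k n).IsRoot x ∧
      ∀ i : ℕ, 1 ≤ i → i < n → ¬ (Ppoly k i).IsRoot x} =
      ↑(((Finset.Icc 1 (n-1)).filter (fun j => Nat.Coprime n j)).image f) := by
    ext x
    simp only [Set.mem_setOf_eq, Finset.coe_image, Set.mem_image, Finset.mem_coe,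
      Finset.mem_filter, Finset.mem_Icc]
    constructor
    · rintro ⟨hroot, hnew⟩
      have hx : x ∈ {x : ℝ | (Ppoly k n).IsRoot x} := hroot
      rw [hroots] at hx
      obtain ⟨j, hj, rfl⟩ := Finset.mem_image.1 hx
      rw [Finset.mem_Icc] at hj
      refine ⟨j, ⟨hj, ?_⟩, rfl⟩
      -- show coprime
      by_contra hnc
      have hd2 : 2 ≤ Nat.gcd n j := by
        have h1 : Nat.gcd n j ≠ 1 := hnc
        have h0 : Nat.gcd n j ≠ 0 := by
          intro h
          have := Nat.eq_zero_of_gcd_eq_zero_left h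
          omega
        omega
      set d := Nat.gcd n j with hdd
      have hdn : d ∣ n := Nat.gcd_dvd_left n j
      have hdj : d ∣ j := Nat.gcd_dvd_right n j
      obtain ⟨a, hna⟩ := hdn
      obtain ⟨b, hjb⟩ := hdj
      have ha1 : 1 ≤ a := by
        rcases Nat.eq_zero_or_pos a with h | h
        · subst h; simp at hna; omega
        · exact h
      have ha2 : a < n := by
        have h2a : 2 * a ≤ d * a := Nat.mul_le_mul_right a hd2
        have h1a : a < 2 * a := by omega
        omega
      refine hnew a ha1 ha2 ?_
      rw [ppoly_isRoot_iff k hk a _ (sin_theta_ne n j hj.1 hj.2 hn)]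
      have harith : (a : ℝ) * ((j : ℝ) * Real.pi / n) = (b : ℝ) * Real.pi := by
        have hn' : (n : ℝ) = (d : ℝ) * a := by exact_mod_cast hna
        have hj' : (j : ℝ) = (d : ℝ) * b := by exact_mod_cast hjb
        have hd0 : (d : ℝ) ≠ 0 := by
          have : 0 < d := by omega
          exact_mod_cast ne_of_gt this
        have ha0 : (a : ℝ) ≠ 0 := by exact_mod_cast (by omega : a ≠ 0)
        rw [hn', hj']
        field_simp
      rw [harith]
      exact Real.sin_nat_mul_pi b
    · rintro ⟨j, ⟨hj, hcop⟩, rfl⟩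
      constructor
      · have : f j ∈ {x : ℝ | (Ppoly k n).IsRoot x} := by
          rw [hroots]
          exact Finset.mem_coe.2 (Finset.mem_image_of_mem f (Finset.mem_Icc.2 hj))
        exact this
      · intro i hi1 hi2 hroot
        rw [ppoly_isRoot_iff k hk i _ (sin_theta_ne n j hj.1 hj.2 hn)] at hroot
        rw [Real.sin_eq_zero_iff] at hroot
        obtain ⟨m, hm⟩ := hroot
        have hdvd : n ∣ i * j := by
          have h1 : (m : ℝ) * n = i * j := by
            have hpi := Real.pi_ne_zero
            have hn0 : (n : ℝ) ≠ 0 := ne_of_gt hnpos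
            have h1' : ((m:ℝ) * n) * Real.pi = ((i:ℝ) * j) * Real.pi := by
              field_simp at hm
              linear_combination Real.pi * hm
            exact mul_right_cancel₀ hpi h1'
          have h2 : (m * (n:ℤ) : ℤ) = (i : ℤ) * j := by exact_mod_cast h1
          have h3 : (n : ℤ) ∣ (i : ℤ) * j := ⟨m, by linear_combination -h2⟩
          exact_mod_cast h3
        have := (Nat.Coprime.dvd_of_dvd_mul_right hcop hdvd)
        have := Nat.le_of_dvd (by omega) this
        omega
  rw [hTeq, Set.ncard_coe_finset]
  rw [Finset.card_image_of_injOn (hinj.mono (by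
    intro j hj
    simp only [Finset.coe_filter, Set.mem_setOf_eq] at hj
    exact Finset.mem_coe.2 hj.1))]
  rw [Nat.totient]
  congr 1
  ext j
  simp only [Finset.mem_filter, Finset.mem_Icc, Finset.mem_range]
  constructor
  · rintro ⟨⟨h1, h2⟩, hc⟩
    exact ⟨by omega, hc⟩
  · rintro ⟨h1, hc⟩
    have hj1 : 1 ≤ j := by
      by_contra h
      have : j = 0 := by omega
      subst this
      simp [Nat.Coprime] at hc
      omega
    exact ⟨⟨hj1, by omega⟩, hc⟩
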